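/- In the ordinal line framework, suppose the mechanism (ρ, W) has distortion strictly smaller than 7, i.e., max(SW(I,P,0), SW(I,P,1)) < 7·SW(I,P, win(I)) for every instance I and every placement P, and suppose that for some integer ℓ ≥ 1, W applied to the multiset consisting of ℓ copies of 0 and ℓ+1 copies of 1 equals 1 (alternative 1 wins whenever ℓ groups are represented by 0 and ℓ+1 groups are represented by 1). Then ρ((2ℓ+3)/(4ℓ+4)) = 0. -/
import Mathlib


/-! Ordinal line framework: the two alternatives are the reals 0 and 1.  Every group has
total agent mass 1 and is summarized by the fraction `x ∈ [0,1]` of its mass that ranks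
alternative 0 farthest; an instance is a finite nonempty multiset of fractions, modelled
as `frac : Fin n → ℝ` with `n > 0`.  A placement assigns to the occurrence `j` positions
`pa j ≥ 1/2` (the mass preferring 0) and `pb j ≤ 1/2` (the mass preferring 1). -/

/-- Social welfare of alternative `z` in the instance `frac` under placement `(pa, pb)`. -/
noncomputable def swOrd {n : ℕ} (frac pa pb : Fin n → ℝ) (z : ℝ) : ℝ :=
  ∑ j, (frac j * |pa j - z| + (1 - frac j) * |pb j - z|)

/-- Winner of the instance `frac` under the mechanism `(ρ, W)`: `W` applied to the
multiset of group representatives. -/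
noncomputable def winOrd (ρ : ℝ → ℝ) (W : Multiset ℝ → ℝ) {n : ℕ}
    (frac : Fin n → ℝ) : ℝ :=
  W (Multiset.map (fun j => ρ (frac j)) Finset.univ.val)

/-- A valid placement: fractions lie in `[0,1]`, the mass preferring 0 is at positions
`≥ 1/2`, and the mass preferring 1 is at positions `≤ 1/2`. -/
def ValidPlacementOrd {n : ℕ} (frac pa pb : Fin n → ℝ) : Prop :=
  (∀ j, 0 ≤ frac j ∧ frac j ≤ 1) ∧ (∀ j, 1 / 2 ≤ pa j) ∧ (∀ j, pb j ≤ 1 / 2)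

/-- A valid ordinal distributed mechanism: `ρ` assigns to every fraction a representative
in `{0,1}`, and `W` assigns to every finite nonempty multiset of representatives in
`{0,1}` a winner occurring in it. -/
def ValidMechOrd (ρ : ℝ → ℝ) (W : Multiset ℝ → ℝ) : Prop :=
  (∀ x : ℝ, 0 ≤ x → x ≤ 1 → ρ x = 0 ∨ ρ x = 1) ∧
  (∀ m : Multiset ℝ, m ≠ 0 → (∀ q ∈ m, q = 0 ∨ q = 1) → W m ∈ m)

/-- If an ordinal mechanism with distortion strictly smaller than 7
chooses alternative 1 as the winner whenever `ℓ` groups are represented by 0 and `ℓ+1`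
groups are represented by 1, then it must represent the fraction `(2ℓ+3)/(4ℓ+4)` by
alternative 0. -/
lemma card_filter_lt_fin (n ℓ : ℕ) (h : ℓ < n) :
    (Finset.univ.filter (fun j : Fin n => (j:ℕ) < ℓ)).card = ℓ := by
  have : (Finset.univ.filter (fun j : Fin n => (j:ℕ) < ℓ)) = Finset.Iio (⟨ℓ, h⟩ : Fin n) := by
    ext j; simp [Fin.lt_def]
  rw [this, Fin.card_Iio]


theorem ordinal_majority_forces_representative
    (ρ : ℝ → ℝ) (W : Multiset ℝ → ℝ) (hmech : ValidMechOrd ρ W)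
    (hdist : ∀ (n : ℕ), 0 < n → ∀ frac pa pb : Fin n → ℝ,
      ValidPlacementOrd frac pa pb →
      max (swOrd frac pa pb 0) (swOrd frac pa pb 1) <
        7 * swOrd frac pa pb (winOrd ρ W frac))
    (ℓ : ℕ) (hℓ : 1 ≤ ℓ)
    (hwin : W (Multiset.replicate ℓ (0 : ℝ) + Multiset.replicate (ℓ + 1) (1 : ℝ)) = 1) :
    ρ ((2 * (ℓ : ℝ) + 3) / (4 * (ℓ : ℝ) + 4)) = 0 := by
  classical
  set L : ℝ := (ℓ : ℝ) with hL
  have hL1 : (1:ℝ) ≤ L := by rw [hL]; exact_mod_cast hℓ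
  set x₀ : ℝ := (2 * L + 3) / (4 * L + 4) with hx₀
  have hden : (0:ℝ) < 4 * L + 4 := by linarith
  have hx₀0 : 0 ≤ x₀ := by
    apply div_nonneg <;> linarith
  have hx₀1 : x₀ ≤ 1 := by
    rw [div_le_one hden]; linarith
  -- Step 1: ρ 1 = 0
  have hρ1 : ρ 1 = 0 := by
    rcases hmech.1 1 (by norm_num) (le_refl 1) with h | h
    · exact h
    · exfalso
      have hvp : ValidPlacementOrd (fun _ : Fin 1 => (1:ℝ)) (fun _ => (1:ℝ))
          (fun _ => (1/2:ℝ)) := by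
        refine ⟨fun j => ⟨by norm_num, le_refl 1⟩, fun j => by norm_num, fun j => le_refl _⟩
      have hwinv : winOrd ρ W (fun _ : Fin 1 => (1:ℝ)) = 1 := by
        unfold winOrd
        have hm : Multiset.map (fun j : Fin 1 => ρ 1) Finset.univ.val
            = {(1:ℝ)} := by
          rw [h, Multiset.map_const']
          simp
        rw [hm]
        have := hmech.2 {(1:ℝ)} (by simp) (by intro q hq; right; simpa using hq)
        simpa using this
      have hd := hdist 1 (by norm_num) _ _ _ hvp
      rw [hwinv] at hd
      have h1 : swOrd (fun _ : Fin 1 => (1:ℝ)) (fun _ => (1:ℝ)) (fun _ => (1/2:ℝ)) 1 = 0 := by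
        unfold swOrd; simp
      have h0 : swOrd (fun _ : Fin 1 => (1:ℝ)) (fun _ => (1:ℝ)) (fun _ => (1/2:ℝ)) 0 = 1 := by
        unfold swOrd; simp
      rw [h0, h1] at hd
      have : max (1:ℝ) 0 = 1 := by norm_num
      rw [this] at hd
      linarith
  -- Step 2: suppose ρ x₀ = 1, derive contradiction
  rcases hmech.1 x₀ hx₀0 hx₀1 with h | hx1
  · exact h
  exfalso
  set n : ℕ := 2 * ℓ + 1 with hn
  have hℓn : ℓ < n := by omega
  set frac : Fin n → ℝ := fun j => if (j:ℕ) < ℓ then 1 else x₀ with hfrac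
  have hvp : ValidPlacementOrd frac (fun _ => (1:ℝ)) (fun _ => (1/2:ℝ)) := by
    refine ⟨fun j => ?_, fun j => by norm_num, fun j => le_refl _⟩
    by_cases hj : (j:ℕ) < ℓ <;> simp [hfrac, hj, hx₀0, hx₀1]
  -- the representatives multiset
  have hmap : Multiset.map (fun j => ρ (frac j)) Finset.univ.val
      = Multiset.replicate ℓ (0:ℝ) + Multiset.replicate (ℓ + 1) (1:ℝ) := by
    have hfn : (fun j => ρ (frac j)) = fun j : Fin n => if (j:ℕ) < ℓ then (0:ℝ) else 1 := by
      funext j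
      by_cases hj : (j:ℕ) < ℓ <;> simp [hfrac, hj, hρ1, hx1]
    rw [hfn]
    apply Multiset.ext.mpr
    intro a
    rw [Multiset.count_map]
    have hfv : ∀ p : Fin n → Prop, ∀ dp : DecidablePred p,
        (Finset.univ.val.filter p) = (Finset.univ.filter p).val := by
      intro p dp; rw [Finset.filter_val]
    by_cases ha0 : a = 0
    · subst ha0
      have hpred : (Finset.univ.val.filter (fun j : Fin n => (0:ℝ) = if (j:ℕ) < ℓ then 0 else 1))
          = (Finset.univ.filter (fun j : Fin n => (j:ℕ) < ℓ)).val := by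
        rw [← Finset.filter_val]
        congr 1
        apply Finset.filter_congr
        intro j _
        by_cases hj : (j:ℕ) < ℓ <;> simp [hj]
      rw [hpred]
      have : Multiset.card (Finset.univ.filter (fun j : Fin n => (j:ℕ) < ℓ)).val = ℓ :=
        card_filter_lt_fin n ℓ hℓn
      rw [this]
      rw [Multiset.count_add, Multiset.count_replicate, Multiset.count_replicate]
      norm_num
    · by_cases ha1 : a = 1
      · subst ha1
        have hpred : (Finset.univ.val.filter (fun j : Fin n => (1:ℝ) = if (j:ℕ) < ℓ then 0 else 1))
            = (Finset.univ.filter (fun j : Fin n => ¬ ((j:ℕ) < ℓ))).val := by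
          rw [← Finset.filter_val]
          congr 1
          apply Finset.filter_congr
          intro j _
          by_cases hj : (j:ℕ) < ℓ <;> simp [hj]
        rw [hpred]
        have hsum := Finset.card_filter_add_card_filter_not
          (s := (Finset.univ : Finset (Fin n))) (p := fun j : Fin n => (j:ℕ) < ℓ)
        have hcard := card_filter_lt_fin n ℓ hℓn
        have huniv : (Finset.univ : Finset (Fin n)).card = n := by simp
        have : (Finset.univ.filter (fun j : Fin n => ¬ ((j:ℕ) < ℓ))).card = ℓ + 1 := by omega
        rw [show Multiset.card (Finset.univ.filter (fun j : Fin n => ¬ ((j:ℕ) < ℓ))).val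
            = (Finset.univ.filter (fun j : Fin n => ¬ ((j:ℕ) < ℓ))).card from rfl, this]
        rw [Multiset.count_add, Multiset.count_replicate, Multiset.count_replicate]
        norm_num
      · have hleft : (Finset.univ.val.filter (fun j : Fin n => a = if (j:ℕ) < ℓ then 0 else 1))
            = 0 := by
          rw [Multiset.filter_eq_nil]
          intro j hj
          by_cases hjl : (j:ℕ) < ℓ <;> simp [hjl] <;> tauto
        rw [hleft]
        rw [Multiset.count_add, Multiset.count_replicate, Multiset.count_replicate,
          if_neg (fun h => ha0 h.symm), if_neg (fun h => ha1 h.symm)]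
        rfl
  have hwinv : winOrd ρ W frac = 1 := by
    unfold winOrd; rw [hmap, hwin]
  -- sum of fractions
  have hScard := card_filter_lt_fin n ℓ hℓn
  have hS : ∑ j, frac j = L + (L + 1) * x₀ := by
    rw [hfrac]
    rw [Finset.sum_ite, Finset.sum_const, Finset.sum_const]
    have hsum := Finset.card_filter_add_card_filter_not
      (s := (Finset.univ : Finset (Fin n))) (p := fun j : Fin n => (j:ℕ) < ℓ)
    have huniv : (Finset.univ : Finset (Fin n)).card = n := by simp
    have hnc : (Finset.univ.filter (fun j : Fin n => ¬ ((j:ℕ) < ℓ))).card = ℓ + 1 := by omega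
    rw [hScard, hnc]
    push_cast
    ring
  have e1 : swOrd frac (fun _ => (1:ℝ)) (fun _ => (1/2:ℝ)) 1 = (↑n - (L + (L+1)*x₀)) / 2 := by
    unfold swOrd
    have : ∀ j : Fin n, frac j * |(1:ℝ) - 1| + (1 - frac j) * |(1/2:ℝ) - 1|
        = (1 - frac j) * (1/2) := by
      intro j
      rw [show |(1:ℝ) - 1| = 0 by norm_num, show |(1/2:ℝ) - 1| = 1/2 by norm_num]
      ring
    rw [Finset.sum_congr rfl (fun j _ => this j)]
    rw [← Finset.sum_mul, Finset.sum_sub_distrib, Finset.sum_const, hS, Finset.card_univ,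
      Fintype.card_fin, nsmul_eq_mul, mul_one]
    ring
  have e0 : swOrd frac (fun _ => (1:ℝ)) (fun _ => (1/2:ℝ)) 0 = (↑n + (L + (L+1)*x₀)) / 2 := by
    unfold swOrd
    have : ∀ j : Fin n, frac j * |(1:ℝ) - 0| + (1 - frac j) * |(1/2:ℝ) - 0|
        = (1 + frac j) * (1/2) := by
      intro j
      rw [show |(1:ℝ) - 0| = 1 by norm_num, show |(1/2:ℝ) - 0| = 1/2 by norm_num]
      ring
    rw [Finset.sum_congr rfl (fun j _ => this j)]
    rw [← Finset.sum_mul, Finset.sum_add_distrib, Finset.sum_const, hS, Finset.card_univ,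
      Fintype.card_fin, nsmul_eq_mul, mul_one]
    ring
  have hncast : (n:ℝ) = 2 * L + 1 := by rw [hn, hL]; push_cast; ring
  have hne : (4:ℝ) * L + 4 ≠ 0 := ne_of_gt hden
  have h7 : (↑n + (L + (L+1)*x₀)) / 2 = 7 * ((↑n - (L + (L+1)*x₀)) / 2) := by
    rw [hncast, hx₀]
    field_simp
    ring
  have hd := hdist n (by omega) frac _ _ hvp
  rw [hwinv, e0, e1] at hd
  have hmax := le_max_left ((↑n + (L + (L+1)*x₀)) / 2) ((↑n - (L + (L+1)*x₀)) / 2)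
  linarith
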